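/- Let Φ be a reduced irreducible root system spanning V which is not simply-laced (i.e., Φ is the disjoint union of exactly two Weyl group orbits), and let Δ ⊆ Φ be a base. If χ ∈ P is Δ-dominant and quasi-constant, then χ = m·η(β) for some simple root β ∈ Δ and some nonnegative integer m; that is, χ is a multiple of a fundamental weight. -/

import Mathlib

namespace QC

open Classical

variable {V : Type*} [AddCommGroup V] [Module ℚ V]

/-- The contragredient action of a linear automorphism `w` of `V` on the dual space,
characterized by `⟨w x, coact w f⟩ = ⟨x, f⟩`, i.e. `(coact w f) x = f (w⁻¹ x)`. -/
noncomputable def coact (w : V ≃ₗ[ℚ] V) (f : Module.Dual ℚ V) : Module.Dual ℚ V :=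
  w.symm.dualMap f

/-- The Weyl group of the data `(Φ, co)`: the subgroup of linear automorphisms of `V`
generated by the reflections `s_α : x ↦ x - ⟨x, α∨⟩ α` for `α ∈ Φ`. -/
def weylGroup (Φ : Set V) (co : V → Module.Dual ℚ V) : Subgroup (V ≃ₗ[ℚ] V) :=
  Subgroup.closure { w : V ≃ₗ[ℚ] V | ∃ α ∈ Φ, ∀ x : V, w x = x - (co α x) • α }

/-- `χ ∈ V` is quasi-constant with respect to a group `G` of automorphisms
(typically the Weyl group, or `W ⋊ Γ`). -/
def IsQuasiConstantWrt (Φ : Set V) (co : V → Module.Dual ℚ V)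
    (G : Subgroup (V ≃ₗ[ℚ] V)) (χ : V) : Prop :=
  ∀ α ∈ Φ, co α χ ≠ 0 → ∀ σ, σ ∈ G → coact σ (co α) χ / co α χ ∈ ({-1, 0, 1} : Set ℚ)

/-- `χ ∈ V` is quasi-constant (with respect to the Weyl group). -/
def IsQuasiConstant (Φ : Set V) (co : V → Module.Dual ℚ V) (χ : V) : Prop :=
  IsQuasiConstantWrt Φ co (weylGroup Φ co) χ

/-- A coweight `μ ∈ V∨` is quasi-constant with respect to a group `G`. -/
def IsQuasiConstantCowtWrt (Φ : Set V) (G : Subgroup (V ≃ₗ[ℚ] V))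
    (μ : Module.Dual ℚ V) : Prop :=
  ∀ α ∈ Φ, μ α ≠ 0 → ∀ σ, σ ∈ G → μ (σ α) / μ α ∈ ({-1, 0, 1} : Set ℚ)

/-- A coweight `μ ∈ V∨` is quasi-constant (with respect to the Weyl group). -/
def IsQuasiConstantCowt (Φ : Set V) (co : V → Module.Dual ℚ V)
    (μ : Module.Dual ℚ V) : Prop :=
  IsQuasiConstantCowtWrt Φ (weylGroup Φ co) μ

/-- `χ ∈ V` is minuscule: `⟨χ, α∨⟩ ∈ {-1,0,1}` for all roots `α`. -/
def IsMinuscule (Φ : Set V) (co : V → Module.Dual ℚ V) (χ : V) : Prop :=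
  ∀ α ∈ Φ, co α χ ∈ ({-1, 0, 1} : Set ℚ)

/-- `μ ∈ V∨` is minuscule: `⟨α, μ⟩ ∈ {-1,0,1}` for all roots `α`. -/
def IsMinusculeCowt (Φ : Set V) (μ : Module.Dual ℚ V) : Prop :=
  ∀ α ∈ Φ, μ α ∈ ({-1, 0, 1} : Set ℚ)

/-- The weight lattice `P = {χ ∈ V : ⟨χ, β∨⟩ ∈ ℤ for all β ∈ Φ}`. -/
def weightLattice (Φ : Set V) (co : V → Module.Dual ℚ V) : Set V :=
  { χ | ∀ β ∈ Φ, ∃ n : ℤ, co β χ = (n : ℚ) }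

/-- The coweight lattice `P∨ = {μ ∈ V∨ : ⟨α, μ⟩ ∈ ℤ for all α ∈ Φ}`. -/
def coweightLattice (Φ : Set V) : Set (Module.Dual ℚ V) :=
  { μ | ∀ α ∈ Φ, ∃ n : ℤ, μ α = (n : ℚ) }

/-- `(Φ, co)` is a reduced root system (not necessarily spanning) in `V`, where
`co α` is the coroot `α∨` viewed as a linear functional, with the Weyl group acting
compatibly on roots and coroots. -/
structure IsRootSystem (Φ : Set V) (co : V → Module.Dual ℚ V) : Prop where
  finite : Φ.Finite
  ne_zero : ∀ α ∈ Φ, α ≠ 0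
  pair_self : ∀ α ∈ Φ, co α α = 2
  refl_mem : ∀ α ∈ Φ, ∀ β ∈ Φ, β - (co α β) • α ∈ Φ
  pair_int : ∀ α ∈ Φ, ∀ β ∈ Φ, ∃ n : ℤ, co α β = (n : ℚ)
  reduced : ∀ α ∈ Φ, ∀ c : ℚ, c • α ∈ Φ → c = 1 ∨ c = -1
  weyl_root : ∀ w, w ∈ weylGroup Φ co → ∀ α ∈ Φ, w α ∈ Φ
  weyl_coroot : ∀ w, w ∈ weylGroup Φ co → ∀ α ∈ Φ, co (w α) = coact w (co α)

/-- `Φ` is irreducible: it is nonempty and admits no nontrivial orthogonal decomposition. -/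
def IsIrreducible (Φ : Set V) (co : V → Module.Dual ℚ V) : Prop :=
  Φ.Nonempty ∧ ∀ Ψ ⊆ Φ, (∀ α ∈ Ψ, ∀ β ∈ Φ \ Ψ, co α β = 0) → Ψ = ∅ ∨ Ψ = Φ

/-- `Δ` is a base (set of simple roots) of `Φ`. -/
structure IsBase (Φ : Set V) (co : V → Module.Dual ℚ V) (Δ : Set V) : Prop where
  subset : Δ ⊆ Φ
  indep : LinearIndependent ℚ ((↑) : Δ → V)
  span_eq : Submodule.span ℚ Δ = Submodule.span ℚ Φ
  decomp : ∀ α ∈ Φ, ∃ c : V →₀ ℕ, ↑c.support ⊆ Δ ∧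
      (α = c.sum (fun v n => (n : ℚ) • v) ∨ α = - c.sum (fun v n => (n : ℚ) • v))

/-- `η` is the fundamental weight `η(α)` for the simple root `α ∈ Δ`:
`⟨η, β∨⟩ = δ_{αβ}` for `β ∈ Δ`. -/
def IsFundWeight (co : V → Module.Dual ℚ V) (Δ : Set V) (α : V) (η : V) : Prop :=
  ∀ β ∈ Δ, co β η = if β = α then 1 else 0

/-- `f` is the fundamental coweight `η(α∨)` for the simple root `α ∈ Δ`:
`⟨β, f⟩ = δ_{αβ}` for `β ∈ Δ`. -/
def IsFundCoweight (Δ : Set V) (α : V) (f : Module.Dual ℚ V) : Prop :=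
  ∀ β ∈ Δ, f β = if β = α then 1 else 0

/-- `χ` is cominuscule: `χ = η(α)` for some base `Δ` and `α ∈ Δ` such that the
fundamental coweight `η(α∨)` is minuscule. -/
def IsCominuscule (Φ : Set V) (co : V → Module.Dual ℚ V) (χ : V) : Prop :=
  χ ∈ Submodule.span ℚ Φ ∧
  ∃ Δ : Set V, IsBase Φ co Δ ∧ ∃ α ∈ Δ, IsFundWeight co Δ α χ ∧
    ∀ f : Module.Dual ℚ V, IsFundCoweight Δ α f → IsMinusculeCowt Φ f

/-- `μ` is a cominuscule coweight: `μ = η(α∨)` for some base `Δ` and `α ∈ Δ` such that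
the fundamental weight `η(α)` is minuscule. -/
def IsCominusculeCowt (Φ : Set V) (co : V → Module.Dual ℚ V)
    (μ : Module.Dual ℚ V) : Prop :=
  ∃ Δ : Set V, IsBase Φ co Δ ∧ ∃ α ∈ Δ, IsFundCoweight Δ α μ ∧
    ∀ η : V, IsFundWeight co Δ α η → IsMinuscule Φ co η

/-- `χ` is `Δ`-dominant. -/
def IsDominant (co : V → Module.Dual ℚ V) (Δ : Set V) (χ : V) : Prop :=
  ∀ α ∈ Δ, 0 ≤ co α χ

/-- `μ ∈ V∨` is `Δ`-dominant. -/
def IsDominantCowt (Δ : Set V) (μ : Module.Dual ℚ V) : Prop :=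
  ∀ α ∈ Δ, 0 ≤ μ α

/-- `χ` is orbitally `p`-close. -/
def IsOrbitallyPClose (Φ : Set V) (co : V → Module.Dual ℚ V) (p : ℕ) (χ : V) : Prop :=
  ∀ α ∈ Φ, co α χ ≠ 0 → ∀ w, w ∈ weylGroup Φ co →
    |coact w (co α) χ / co α χ| ≤ (p : ℚ) - 1

variable {Φ : Set V} {co : V → Module.Dual ℚ V}

/-- The reflection attached to a root, as a linear automorphism in the Weyl group. -/
theorem exists_refl (hRS : IsRootSystem Φ co) {α : V} (hα : α ∈ Φ) :
    ∃ s : V ≃ₗ[ℚ] V, s ∈ weylGroup Φ co ∧ (∀ x, s x = x - (co α x) • α) ∧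
      (∀ x, s.symm x = x - (co α x) • α) := by
  set f : V →ₗ[ℚ] V := LinearMap.id - (LinearMap.smulRight (co α) α) with hf
  have hfapp : ∀ x, f x = x - (co α x) • α := fun x => rfl
  have hinv : Function.Involutive f := by
    intro x
    have h2 : co α α = 2 := hRS.pair_self α hα
    simp only [hfapp, map_sub, map_smul, h2, smul_eq_mul]
    module
  refine ⟨LinearEquiv.ofInvolutive f hinv, ?_, fun x => rfl, ?_⟩
  · exact Subgroup.subset_closure ⟨α, hα, fun x => rfl⟩
  · intro x
    apply (LinearEquiv.symm_apply_eq _).2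
    exact (hinv x).symm


theorem weyl_inv_root (hRS : IsRootSystem Φ co) {w : V ≃ₗ[ℚ] V} (hw : w ∈ weylGroup Φ co)
    {α : V} (hα : α ∈ Φ) : w.symm α ∈ Φ := by
  have : w⁻¹ ∈ weylGroup Φ co := inv_mem hw
  exact hRS.weyl_root _ this α hα

theorem weyl_finite (hRS : IsRootSystem Φ co) (hspan : Submodule.span ℚ Φ = ⊤) :
    Finite (weylGroup Φ co) := by
  have : Finite Φ := hRS.finite.to_subtype
  refine Finite.of_injective
    (fun w : weylGroup Φ co => fun a : Φ => (⟨w.1 a, hRS.weyl_root _ w.2 a a.2⟩ : Φ)) ?_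
  intro w₁ w₂ h
  have h' : ∀ a : Φ, w₁.1 a.1 = w₂.1 a.1 := fun a => congrArg Subtype.val (congrFun h a)
  apply Subtype.ext
  apply LinearEquiv.toLinearMap_injective
  apply LinearMap.ext_on hspan
  intro x hx
  exact h' ⟨x, hx⟩

/-- A Weyl-invariant positive-definite symmetric bilinear form. -/
theorem exists_form (hRS : IsRootSystem Φ co) (hspan : Submodule.span ℚ Φ = ⊤)
    [FiniteDimensional ℚ V] :
    ∃ B : V →ₗ[ℚ] V →ₗ[ℚ] ℚ, (∀ x y, B x y = B y x) ∧ (∀ x, x ≠ 0 → 0 < B x x) ∧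
      (∀ w, w ∈ weylGroup Φ co → ∀ x y, B (w x) (w y) = B x y) := by
  classical
  set b := Module.finBasis ℚ V with hb
  set Q : V →ₗ[ℚ] V →ₗ[ℚ] ℚ := LinearMap.mk₂ ℚ (fun x y => ∑ i, b.repr x i * b.repr y i)
    (fun x₁ x₂ y => by simp [map_add, add_mul, Finset.sum_add_distrib])
    (fun c x y => by simp [map_smul, Finset.mul_sum, mul_assoc])
    (fun x y₁ y₂ => by simp [map_add, mul_add, Finset.sum_add_distrib])
    (fun c x y => by
      simp only [map_smul, Finsupp.smul_apply, smul_eq_mul, Finset.mul_sum]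
      exact Finset.sum_congr rfl fun i _ => by ring) with hQ
  have hQapp : ∀ x y, Q x y = ∑ i, b.repr x i * b.repr y i := fun x y => rfl
  have hQsym : ∀ x y, Q x y = Q y x := fun x y => by
    simp only [hQapp]; exact Finset.sum_congr rfl fun i _ => mul_comm _ _
  have hQpos : ∀ x, x ≠ 0 → 0 < Q x x := by
    intro x hx
    have h1 : ∀ i, 0 ≤ b.repr x i * b.repr x i := fun i => mul_self_nonneg _
    have h2 : ∃ i, b.repr x i ≠ 0 := by
      by_contra hc
      push_neg at hc
      apply hx
      have : b.repr x = 0 := Finsupp.ext fun i => hc i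
      simpa using congrArg b.repr.symm this
    obtain ⟨i, hi⟩ := h2
    rw [hQapp]
    exact Finset.sum_pos' (fun j _ => h1 j) ⟨i, Finset.mem_univ i, by rcases hi.lt_or_gt with h | h; exacts [mul_pos_of_neg_of_neg h h, mul_pos h h]⟩
  haveI : Finite (weylGroup Φ co) := weyl_finite hRS hspan
  haveI : Fintype (weylGroup Φ co) := Fintype.ofFinite _
  set B : V →ₗ[ℚ] V →ₗ[ℚ] ℚ := LinearMap.mk₂ ℚ
    (fun x y => ∑ w : weylGroup Φ co, Q (w.1 x) (w.1 y))
    (fun x₁ x₂ y => by simp [map_add, Finset.sum_add_distrib])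
    (fun c x y => by simp [map_smul, Finset.mul_sum])
    (fun x y₁ y₂ => by simp [map_add, Finset.sum_add_distrib])
    (fun c x y => by simp [map_smul, Finset.mul_sum]) with hB
  have hBapp : ∀ x y, B x y = ∑ w : weylGroup Φ co, Q (w.1 x) (w.1 y) := fun x y => rfl
  refine ⟨B, fun x y => by simp only [hBapp]; exact Finset.sum_congr rfl fun w _ => hQsym _ _,
    ?_, ?_⟩
  · intro x hx
    rw [hBapp]
    refine Finset.sum_pos' (fun w _ => ?_) ⟨1, Finset.mem_univ _, ?_⟩
    · rcases eq_or_ne (w.1 x) 0 with h | h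
      · simp [h]
      · exact (hQpos _ h).le
    · simpa using hQpos x hx
  · intro w hw x y
    rw [hBapp, hBapp]
    set u : weylGroup Φ co := ⟨w, hw⟩ with hu
    have heq : ∀ g : weylGroup Φ co,
        Q ((g.1 : V ≃ₗ[ℚ] V) (w x)) (g.1 (w y)) = Q ((g * u).1 x) ((g * u).1 y) := by
      intro g; rfl
    calc ∑ g : weylGroup Φ co, Q (g.1 (w x)) (g.1 (w y))
        = ∑ g : weylGroup Φ co, Q ((g * u).1 x) ((g * u).1 y) :=
          Finset.sum_congr rfl fun g _ => heq g
      _ = ∑ g : weylGroup Φ co, Q (g.1 x) (g.1 y) :=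
          Fintype.sum_bijective (fun g : weylGroup Φ co => g * u)
            (Group.mulRight_bijective u) _ _ (fun g => rfl)


section Form

variable {B : V →ₗ[ℚ] V →ₗ[ℚ] ℚ}

theorem refl_form (hRS : IsRootSystem Φ co)
    (hinv : ∀ w, w ∈ weylGroup Φ co → ∀ x y, B (w x) (w y) = B x y)
    {α : V} (hα : α ∈ Φ) (x : V) : co α x * B α α = 2 * B x α := by
  obtain ⟨s, hsW, hs, -⟩ := exists_refl hRS hα
  have h := hinv s hsW x α
  rw [hs x, hs α, hRS.pair_self α hα] at h
  simp only [map_sub, map_smul, LinearMap.sub_apply, LinearMap.smul_apply, smul_eq_mul] at h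
  linarith [h]

theorem form_root_pos (hRS : IsRootSystem Φ co)
    (hpos : ∀ x : V, x ≠ 0 → 0 < B x x) {α : V} (hα : α ∈ Φ) : 0 < B α α :=
  hpos α (hRS.ne_zero α hα)

theorem co_pos_iff (hRS : IsRootSystem Φ co)
    (hpos : ∀ x : V, x ≠ 0 → 0 < B x x)
    (hinv : ∀ w, w ∈ weylGroup Φ co → ∀ x y, B (w x) (w y) = B x y)
    {α : V} (hα : α ∈ Φ) (x : V) : 0 < co α x ↔ 0 < B x α := by
  have h := refl_form hRS hinv hα x
  have h2 := form_root_pos hRS hpos hα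
  constructor <;> intro h3 <;> nlinarith

theorem co_neg_iff (hRS : IsRootSystem Φ co)
    (hpos : ∀ x : V, x ≠ 0 → 0 < B x x)
    (hinv : ∀ w, w ∈ weylGroup Φ co → ∀ x y, B (w x) (w y) = B x y)
    {α : V} (hα : α ∈ Φ) (x : V) : co α x < 0 ↔ B x α < 0 := by
  have h := refl_form hRS hinv hα x
  have h2 := form_root_pos hRS hpos hα
  constructor <;> intro h3 <;> nlinarith

theorem co_zero_iff (hRS : IsRootSystem Φ co)
    (hpos : ∀ x : V, x ≠ 0 → 0 < B x x)
    (hinv : ∀ w, w ∈ weylGroup Φ co → ∀ x y, B (w x) (w y) = B x y)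
    {α : V} (hα : α ∈ Φ) (x : V) : co α x = 0 ↔ B x α = 0 := by
  have h := refl_form hRS hinv hα x
  have h2 := form_root_pos hRS hpos hα
  constructor <;> intro h3 <;> nlinarith

end Form

section Coord

/-- Sum of a rational finsupp as a vector. -/
def sumq (f : V →₀ ℚ) : V := f.sum fun v a => a • v

/-- Sum of a natural finsupp as a vector. -/
def sumn (c : V →₀ ℕ) : V := c.sum fun v n => (n : ℚ) • v

/-- A natural finsupp as a rational finsupp. -/
noncomputable def qf (c : V →₀ ℕ) : V →₀ ℚ := c.mapRange (fun n : ℕ => (n : ℚ)) Nat.cast_zero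

@[simp] theorem qf_apply (c : V →₀ ℕ) (v : V) : qf c v = (c v : ℚ) := Finsupp.mapRange_apply

theorem qf_support (c : V →₀ ℕ) : (qf c).support ⊆ c.support :=
  Finsupp.support_mapRange

theorem sumq_qf (c : V →₀ ℕ) : sumq (qf c) = sumn c := by
  unfold sumq sumn qf
  apply Finsupp.sum_mapRange_index
  intro v; simp

theorem sumq_single (v : V) (a : ℚ) : sumq (Finsupp.single v a) = a • v := by
  unfold sumq
  exact Finsupp.sum_single_index (by simp)

theorem sumq_add (f g : V →₀ ℚ) : sumq (f + g) = sumq f + sumq g := by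
  unfold sumq
  exact Finsupp.sum_add_index' (fun v => by simp) (fun v a b => add_smul a b v)

theorem sumq_neg (f : V →₀ ℚ) : sumq (-f) = - sumq f := by
  have := sumq_add f (-f)
  simp only [add_neg_cancel] at this
  have h0 : sumq (0 : V →₀ ℚ) = 0 := by unfold sumq; simp
  rw [h0] at this
  linear_combination (norm := module) -this

theorem sumq_sub (f g : V →₀ ℚ) : sumq (f - g) = sumq f - sumq g := by
  rw [sub_eq_add_neg, sumq_add, sumq_neg, sub_eq_add_neg]

variable {Δ : Set V}

theorem uniq (hΔ : IsBase Φ co Δ) {f g : V →₀ ℚ} (hf : ↑f.support ⊆ Δ)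
    (hg : ↑g.support ⊆ Δ) (h : sumq f = sumq g) : f = g := by
  have hli := linearIndepOn_iff.1 (linearIndependent_subtype_iff.1 hΔ.indep)
  have hsub : f - g ∈ Finsupp.supported ℚ ℚ Δ := by
    intro v hv
    rcases Finset.mem_union.1 (Finsupp.support_sub hv) with h' | h'
    · exact hf h'
    · exact hg h'
  have hzero : Finsupp.linearCombination ℚ id (f - g) = 0 := by
    rw [Finsupp.linearCombination_apply]
    have : (f - g).sum (fun i a => a • id i) = sumq (f - g) := rfl
    rw [this, sumq_sub, h, sub_self]
  have := hli (f - g) hsub hzero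
  exact sub_eq_zero.1 this

end Coord

section FactB

variable {B : V →ₗ[ℚ] V →ₗ[ℚ] ℚ} {Δ : Set V}

theorem neg_mem (hRS : IsRootSystem Φ co) {α : V} (hα : α ∈ Φ) : -α ∈ Φ := by
  have := hRS.refl_mem α hα α hα
  rw [hRS.pair_self α hα] at this
  have h : α - (2 : ℚ) • α = -α := by module
  rwa [h] at this

/-- Strict Cauchy-Schwarz for independent vectors. -/
theorem cs_strict (hpos : ∀ x : V, x ≠ 0 → 0 < B x x) (hsym : ∀ x y, B x y = B y x)
    {x y : V} (hx : x ≠ 0) (hy : y ∉ Submodule.span ℚ ({x} : Set V)) :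
    B x y ^ 2 < B x x * B y y := by
  have hxx : 0 < B x x := hpos x hx
  set z : V := B x x • y - B x y • x with hz
  have hzne : z ≠ 0 := by
    intro h
    apply hy
    have : B x x • y = B x y • x := by
      have := sub_eq_zero.1 h
      linear_combination (norm := module) this
    have : y = (B x x)⁻¹ • (B x y • x) := by
      rw [← this, smul_smul, inv_mul_cancel₀ (ne_of_gt hxx), one_smul]
    rw [this, smul_smul]
    exact Submodule.smul_mem _ _ (Submodule.mem_span_singleton_self x)
  have hzz : 0 < B z z := hpos z hzne
  have hexp : B z z = B x x * (B x x * B y y - B x y ^ 2) := by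
    rw [hz]
    simp only [map_sub, map_smul, LinearMap.sub_apply, LinearMap.smul_apply, smul_eq_mul]
    rw [hsym y x]
    ring
  nlinarith

/-- Distinct simple roots pair non-positively. -/
theorem base_pair_nonpos (hRS : IsRootSystem Φ co) (hΔ : IsBase Φ co Δ)
    (hpos : ∀ x : V, x ≠ 0 → 0 < B x x) (hsym : ∀ x y, B x y = B y x)
    (hinv : ∀ w, w ∈ weylGroup Φ co → ∀ x y, B (w x) (w y) = B x y)
    {β γ : V} (hβ : β ∈ Δ) (hγ : γ ∈ Δ) (hne : β ≠ γ) :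
    B β γ ≤ 0 ∧ co β γ ≤ 0 ∧ co γ β ≤ 0 := by
  have hβΦ := hΔ.subset hβ
  have hγΦ := hΔ.subset hγ
  have hββ := form_root_pos hRS hpos hβΦ
  have hγγ := form_root_pos hRS hpos hγΦ
  have key : B β γ ≤ 0 := by
    by_contra hBpos
    push_neg at hBpos
    -- γ not in span of β
    have hindep : γ ∉ Submodule.span ℚ ({β} : Set V) := by
      have h1 : (⟨γ, hγ⟩ : Δ) ∉ ({⟨β, hβ⟩} : Set Δ) := by
        intro h
        exact hne (congrArg Subtype.val (Set.mem_singleton_iff.1 h)).symm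
      have h2 := hΔ.indep.notMem_span_image (R := ℚ) h1
      have h3 : ((↑) : Δ → V) '' {⟨β, hβ⟩} = {β} := by simp
      rwa [h3] at h2
    have hcs := cs_strict hpos hsym (hRS.ne_zero β hβΦ) hindep
    have ha := refl_form hRS hinv hβΦ γ  -- co β γ * B β β = 2 * B γ β
    have hb := refl_form hRS hinv hγΦ β  -- co γ β * B γ γ = 2 * B β γ
    obtain ⟨ka, hka⟩ := hRS.pair_int β hβΦ γ hγΦ
    obtain ⟨kb, hkb⟩ := hRS.pair_int γ hγΦ β hβΦ
    have hsymβγ : B γ β = B β γ := hsym γ β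
    have hapos : 0 < co β γ := by nlinarith
    have hbpos : 0 < co γ β := by nlinarith
    have hablt : co β γ * co γ β < 4 := by nlinarith
    -- integer arithmetic : ka = 1 or kb = 1
    have hka1 : (1 : ℤ) ≤ ka := by
      have : (0 : ℚ) < ka := hka ▸ hapos
      exact_mod_cast this
    have hkb1 : (1 : ℤ) ≤ kb := by
      have : (0 : ℚ) < kb := hkb ▸ hbpos
      exact_mod_cast this
    have hprod : ka * kb < 4 := by
      have : ((ka * kb : ℤ) : ℚ) < 4 := by push_cast; rw [← hka, ← hkb]; exact hablt
      exact_mod_cast this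
    have hone : ka = 1 ∨ kb = 1 := by
      by_contra hc
      push_neg at hc
      have h1 : 2 ≤ ka := by omega
      have h2 : 2 ≤ kb := by omega
      nlinarith
    -- in either case, γ - β ∈ Φ
    have hroot : γ - β ∈ Φ := by
      rcases hone with h1 | h1
      · have := hRS.refl_mem β hβΦ γ hγΦ
        rw [hka, h1] at this
        simpa using this
      · have := hRS.refl_mem γ hγΦ β hβΦ
        rw [hkb, h1] at this
        have h2 : β - (1 : ℚ) • γ = β - γ := by module
        rw [Int.cast_one, h2] at this
        have := neg_mem hRS this
        rwa [neg_sub] at this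
    -- contradiction with the base decomposition
    obtain ⟨c, hcsupp, hcs2⟩ := hΔ.decomp _ hroot
    have hfsupp : ↑(Finsupp.single γ (1 : ℚ) - Finsupp.single β 1).support ⊆ Δ := by
      intro v hv
      rcases Finset.mem_union.1 (Finsupp.support_sub (Finset.mem_coe.1 hv)) with h' | h'
      · have := Finsupp.support_single_subset h'
        simp only [Finset.mem_singleton] at this
        exact this ▸ hγ
      · have := Finsupp.support_single_subset h'
        simp only [Finset.mem_singleton] at this
        exact this ▸ hβ
    have hsq : sumq (Finsupp.single γ (1 : ℚ) - Finsupp.single β 1) = γ - β := by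
      rw [sumq_sub, sumq_single, sumq_single, one_smul, one_smul]
    rcases hcs2 with hpos2 | hneg2
    · have : qf c = Finsupp.single γ (1 : ℚ) - Finsupp.single β 1 := by
        apply uniq hΔ (Finset.coe_subset.2 (qf_support c) |>.trans hcsupp) hfsupp
        rw [sumq_qf, hsq]
        exact hpos2.symm
      have hβval := DFunLike.congr_fun this β
      simp only [qf_apply, Finsupp.coe_sub, Pi.sub_apply] at hβval
      rw [Finsupp.single_apply, Finsupp.single_apply] at hβval
      rw [if_neg (fun h => hne h.symm), if_pos rfl] at hβval
      have : (0 : ℚ) ≤ (c β : ℚ) := Nat.cast_nonneg _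
      rw [hβval] at this
      norm_num at this
    · have : qf c = Finsupp.single β (1 : ℚ) - Finsupp.single γ 1 := by
        apply uniq hΔ (Finset.coe_subset.2 (qf_support c) |>.trans hcsupp)
        · intro v hv
          rcases Finset.mem_union.1 (Finsupp.support_sub (Finset.mem_coe.1 hv)) with h' | h'
          · have := Finsupp.support_single_subset h'
            simp only [Finset.mem_singleton] at this
            exact this ▸ hβ
          · have := Finsupp.support_single_subset h'
            simp only [Finset.mem_singleton] at this
            exact this ▸ hγ
        · rw [sumq_qf, sumq_sub, sumq_single, sumq_single, one_smul, one_smul]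
          show (c.sum fun v n => (n : ℚ) • v) = β - γ
          linear_combination (norm := module) hneg2
      have hγval := DFunLike.congr_fun this γ
      simp only [qf_apply, Finsupp.coe_sub, Pi.sub_apply] at hγval
      rw [Finsupp.single_apply, Finsupp.single_apply] at hγval
      rw [if_neg hne, if_pos rfl] at hγval
      have : (0 : ℚ) ≤ (c γ : ℚ) := Nat.cast_nonneg _
      rw [hγval] at this
      norm_num at this
  refine ⟨key, ?_, ?_⟩
  · have ha := refl_form hRS hinv hβΦ γ
    have h' : B γ β = B β γ := hsym γ β
    nlinarith
  · have hb := refl_form hRS hinv hγΦ β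
    nlinarith

end FactB

section Split

variable {B : V →ₗ[ℚ] V →ₗ[ℚ] ℚ} {Δ : Set V}

theorem span_ortho {S₁ S₂ : Set V} (hX : ∀ x ∈ S₁, ∀ y ∈ S₂, B x y = 0)
    {x y : V} (hx : x ∈ Submodule.span ℚ S₁) (hy : y ∈ Submodule.span ℚ S₂) :
    B x y = 0 := by
  have h1 : ∀ x' ∈ S₁, B x' y = 0 := by
    intro x' hx'
    have : Submodule.span ℚ S₂ ≤ LinearMap.ker (B x') :=
      Submodule.span_le.2 fun y' hy' => LinearMap.mem_ker.2 (hX x' hx' y' hy')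
    exact this hy
  have h2 : Submodule.span ℚ S₁ ≤ LinearMap.ker (B.flip y) :=
    Submodule.span_le.2 fun x' hx' => LinearMap.mem_ker.2 (h1 x' hx')
  exact h2 hx

theorem sumn_mem_span {S : Set V} {c : V →₀ ℕ} (h : ↑c.support ⊆ S) :
    sumn c ∈ Submodule.span ℚ S :=
  Submodule.sum_mem _ fun v hv => Submodule.smul_mem _ _ (Submodule.subset_span (h hv))

theorem coords_in_span {S : Set V} (hΔ : IsBase Φ co Δ) (hS : S ⊆ Δ) {d : V →₀ ℕ}
    (hd : ↑d.support ⊆ Δ) (hmem : sumn d ∈ Submodule.span ℚ S) :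
    ↑d.support ⊆ S := by
  obtain ⟨f, hfsupp, hfsum⟩ := Submodule.mem_span_set.1 hmem
  have : qf d = f := by
    apply uniq hΔ ((Finset.coe_subset.2 (qf_support d)).trans hd) (hfsupp.trans hS)
    rw [sumq_qf]
    exact hfsum.symm
  intro v hv
  have hv' : v ∈ (qf d).support := by
    simp only [Finsupp.mem_support_iff, qf_apply, ne_eq, Nat.cast_eq_zero]
    exact Finsupp.mem_support_iff.1 hv
  rw [this] at hv'
  exact hfsupp hv'

theorem valsum (c : V →₀ ℕ) : ((c.sum fun _ k => k : ℕ) : ℚ) = (qf c).sum fun _ a => a := by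
  rw [show ((qf c).sum fun _ a => a) = c.sum fun _ k => (k : ℚ) from
    Finsupp.sum_mapRange_index fun v => rfl]
  unfold Finsupp.sum
  push_cast
  rfl

/-- The collapse case in the splitting induction is impossible. -/
theorem collapse (hRS : IsRootSystem Φ co) (hΔ : IsBase Φ co Δ)
    (hpos : ∀ x : V, x ≠ 0 → 0 < B x x) (hsym : ∀ x y, B x y = B y x)
    (hinv : ∀ w, w ∈ weylGroup Φ co → ∀ x y, B (w x) (w y) = B x y)
    {Δ₁ : Set V}
    (hX' : ∀ x ∈ Δ₁, ∀ y ∈ (Δ \ Δ₁ : Set V), B x y = 0)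
    (hX'' : ∀ x ∈ (Δ \ Δ₁ : Set V), ∀ y ∈ Δ₁, B x y = 0)
    (hΔ₁ : Δ₁ ⊆ Δ) {α δ β : V} {d : V →₀ ℕ} {km : ℤ}
    (hα : α ∈ Φ) (hδΦ : δ ∈ Φ) (hδΔ : δ ∈ Δ) (hβΦ : β ∈ Φ) (hβne : β ≠ 0)
    (hdsupp : ↑d.support ⊆ Δ) (hdsum : β = sumn d)
    (hkm : co δ α = (km : ℚ)) (hkm1 : 1 ≤ km)
    (hβdef : β = α - (co δ α) • δ)
    (hcross : (δ ∈ Δ₁ ∧ β ∈ Submodule.span ℚ (Δ \ Δ₁ : Set V)) ∨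
      (δ ∈ (Δ \ Δ₁ : Set V) ∧ β ∈ Submodule.span ℚ Δ₁)) : False := by
  obtain ⟨m, hmdef⟩ : ∃ m : ℚ, co δ α = m := ⟨_, rfl⟩
  rw [hmdef] at hkm hβdef
  have hm1 : (1 : ℚ) ≤ m := by rw [hkm]; exact_mod_cast hkm1
  have hαβ : α = β + m • δ := by rw [hβdef]; module
  -- orthogonality of β and δ, and support location of d
  have hBβδ : B β δ = 0 := by
    rcases hcross with ⟨h1, h2⟩ | ⟨h1, h2⟩
    · exact span_ortho hX'' h2 (Submodule.subset_span h1)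
    · exact span_ortho hX' h2 (Submodule.subset_span h1)
  have hδd : δ ∉ d.support := by
    rcases hcross with ⟨h1, h2⟩ | ⟨h1, h2⟩
    · intro hmem
      exact (coords_in_span hΔ (Set.diff_subset) hdsupp (hdsum ▸ h2) hmem).2 h1
    · intro hmem
      exact h1.2 (coords_in_span hΔ hΔ₁ hdsupp (hdsum ▸ h2) hmem)
  have hcoβδ : co β δ = 0 :=
    (co_zero_iff hRS hpos hinv hβΦ δ).2 ((hsym δ β).trans hBβδ)
  have hcoβα : co β α = 2 := by
    rw [hαβ, map_add, map_smul, hcoβδ, hRS.pair_self β hβΦ, smul_eq_mul, mul_zero, add_zero]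
  have hτΦ : m • δ - sumn d ∈ Φ := by
    have := hRS.refl_mem β hβΦ α hα
    rw [hcoβα] at this
    have heq : α - (2 : ℚ) • β = m • δ - sumn d := by
      rw [hαβ, hdsum]; module
    rwa [heq] at this
  -- d is nonzero
  have hdne : d ≠ 0 := by
    intro h
    apply hβne
    rw [hdsum, h]
    unfold sumn
    simp
  obtain ⟨y, hys⟩ := Finsupp.support_nonempty_iff.2 hdne
  have hyδ : y ≠ δ := fun h => hδd (h ▸ hys)
  have hdy : 1 ≤ d y := Nat.one_le_iff_ne_zero.2 (Finsupp.mem_support_iff.1 hys)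
  have hδsuppΔ : ↑(Finsupp.single δ m).support ⊆ Δ := by
    intro v hv
    have := Finsupp.support_single_subset (Finset.mem_coe.1 hv)
    simp only [Finset.mem_singleton] at this
    exact this ▸ hδΔ
  obtain ⟨e, hesupp, hesign⟩ := hΔ.decomp _ hτΦ
  rcases hesign with hepos | heneg
  · have hkey : Finsupp.single δ m - qf d = qf e := by
      apply uniq hΔ
      · intro v hv
        rcases Finset.mem_union.1 (Finsupp.support_sub (Finset.mem_coe.1 hv)) with h' | h'
        · exact hδsuppΔ h'
        · exact (Finset.coe_subset.2 (qf_support d)).trans hdsupp h'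
      · exact (Finset.coe_subset.2 (qf_support e)).trans hesupp
      · rw [sumq_sub, sumq_single, sumq_qf, sumq_qf]
        exact hepos
    have := DFunLike.congr_fun hkey y
    simp only [Finsupp.sub_apply, qf_apply, Finsupp.single_apply,
      if_neg (fun h : δ = y => hyδ h.symm)] at this
    have h1 : (1 : ℚ) ≤ (d y : ℚ) := by exact_mod_cast hdy
    have h2 : (0 : ℚ) ≤ (e y : ℚ) := Nat.cast_nonneg _
    linarith
  · have hkey : Finsupp.single δ m + qf e = qf d := by
      apply uniq hΔ
      · intro v hv
        rcases Finset.mem_union.1 (Finsupp.support_add (Finset.mem_coe.1 hv)) with h' | h'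
        · exact hδsuppΔ h'
        · exact (Finset.coe_subset.2 (qf_support e)).trans hesupp h'
      · exact (Finset.coe_subset.2 (qf_support d)).trans hdsupp
      · rw [sumq_add, sumq_single, sumq_qf, sumq_qf]
        have h3 : m • δ - sumn d = -(sumn e) := heneg
        linear_combination (norm := module) h3
    have := DFunLike.congr_fun hkey δ
    simp only [Finsupp.add_apply, qf_apply, Finsupp.single_apply, if_pos rfl, ite_true] at this
    have h1 : (d δ : ℚ) = 0 := by
      rw [Finsupp.notMem_support_iff.1 hδd]; simp
    have h2 : (0 : ℚ) ≤ (e δ : ℚ) := Nat.cast_nonneg _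
    rw [h1] at this
    linarith

/-- If the base splits into two orthogonal pieces, every root lies in the span
of one of the pieces. -/
theorem split (hRS : IsRootSystem Φ co) (hΔ : IsBase Φ co Δ)
    (hpos : ∀ x : V, x ≠ 0 → 0 < B x x) (hsym : ∀ x y, B x y = B y x)
    (hinv : ∀ w, w ∈ weylGroup Φ co → ∀ x y, B (w x) (w y) = B x y)
    {Δ₁ : Set V} (hΔ₁ : Δ₁ ⊆ Δ)
    (hX : ∀ x ∈ Δ₁, ∀ y ∈ Δ, y ∉ Δ₁ → B x y = 0) :
    ∀ α ∈ Φ, α ∈ Submodule.span ℚ Δ₁ ∨ α ∈ Submodule.span ℚ (Δ \ Δ₁) := by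
  have hX' : ∀ x ∈ Δ₁, ∀ y ∈ (Δ \ Δ₁ : Set V), B x y = 0 := fun x hx y hy =>
    hX x hx y hy.1 hy.2
  have hX'' : ∀ x ∈ (Δ \ Δ₁ : Set V), ∀ y ∈ Δ₁, B x y = 0 := fun x hx y hy =>
    (hsym x y).trans (hX' y hy x hx)
  have claim : ∀ n : ℕ, ∀ α ∈ Φ, ∀ c : V →₀ ℕ, ↑c.support ⊆ Δ →
      α = c.sum (fun v k => (k : ℚ) • v) → (c.sum fun _ k => k) = n →
      α ∈ Submodule.span ℚ Δ₁ ∨ α ∈ Submodule.span ℚ (Δ \ Δ₁) := by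
    intro n
    induction n using Nat.strong_induction_on with
    | _ n IH =>
    intro α hα c hcsupp hcsum hcht
    have hcsum' : α = sumn c := hcsum
    by_cases hs1 : ↑c.support ⊆ Δ₁
    · left; rw [hcsum']; exact sumn_mem_span hs1
    by_cases hs2 : ↑c.support ⊆ (Δ \ Δ₁ : Set V)
    · right; rw [hcsum']; exact sumn_mem_span hs2
    -- mixed support
    obtain ⟨y₂, hy₂s, hy₂⟩ : ∃ v, v ∈ c.support ∧ v ∉ Δ₁ := by
      by_contra hc; push_neg at hc
      exact hs1 fun v hv => hc v (Finset.mem_coe.1 hv)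
    obtain ⟨y₁, hy₁s, hy₁⟩ : ∃ v, v ∈ c.support ∧ v ∈ Δ₁ := by
      by_contra hc; push_neg at hc
      exact hs2 fun v hv => ⟨hcsupp hv, hc v (Finset.mem_coe.1 hv)⟩
    have hαne : α ≠ 0 := hRS.ne_zero α hα
    have hBαα : 0 < B α α := hpos α hαne
    have hBsum : B α (sumn c) = c.sum fun v k => (k : ℚ) * B α v := by
      unfold sumn
      rw [map_finsuppSum]
      exact Finsupp.sum_congr fun v _ => by rw [map_smul, smul_eq_mul]
    obtain ⟨δ, hδs, hδB⟩ : ∃ v, v ∈ c.support ∧ 0 < B α v := by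
      by_contra hno; push_neg at hno
      have : B α (sumn c) ≤ 0 := by
        rw [hBsum]
        refine Finset.sum_nonpos fun v hv => ?_
        exact mul_nonpos_iff.2 (Or.inl ⟨Nat.cast_nonneg _, hno v hv⟩)
      rw [← hcsum'] at this
      linarith
    have hδΔ : δ ∈ Δ := hcsupp hδs
    have hδΦ : δ ∈ Φ := hΔ.subset hδΔ
    by_cases hαδ : α = δ
    · by_cases hδ1 : δ ∈ Δ₁
      · left; rw [hαδ]; exact Submodule.subset_span hδ1
      · right; rw [hαδ]; exact Submodule.subset_span ⟨hδΔ, hδ1⟩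
    have hm : 0 < co δ α := (co_pos_iff hRS hpos hinv hδΦ α).2 hδB
    obtain ⟨km, hkm⟩ := hRS.pair_int δ hδΦ α hα
    have hkm1 : (1 : ℤ) ≤ km := by
      have : (0 : ℚ) < km := hkm ▸ hm
      exact_mod_cast this
    set m : ℚ := co δ α with hmdef
    have hβΦ : α - m • δ ∈ Φ := hRS.refl_mem δ hδΦ α hα
    set β : V := α - m • δ with hβdef
    have hβne : β ≠ 0 := hRS.ne_zero β hβΦ
    obtain ⟨d, hdsupp, hdsign⟩ := hΔ.decomp β hβΦ
    have hδsuppΔ : ↑(Finsupp.single δ m).support ⊆ Δ := by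
      intro v hv
      have := Finsupp.support_single_subset (Finset.mem_coe.1 hv)
      simp only [Finset.mem_singleton] at this
      exact this ▸ hδΔ
    rcases hdsign with hdpos | hdneg
    · -- β = sumn d
      have hdsum : β = sumn d := hdpos
      have hkey : qf c = qf d + Finsupp.single δ m := by
        apply uniq hΔ ((Finset.coe_subset.2 (qf_support c)).trans hcsupp)
        · intro v hv
          rcases Finset.mem_union.1 (Finsupp.support_add (Finset.mem_coe.1 hv)) with h' | h'
          · exact (Finset.coe_subset.2 (qf_support d)).trans hdsupp h'
          · exact hδsuppΔ h'
        · rw [sumq_qf, sumq_add, sumq_qf, sumq_single, ← hdsum, ← hcsum']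
          rw [hβdef]; module
      -- heights
      have hhtq : ((c.sum fun _ k => k : ℕ) : ℚ) = ((d.sum fun _ k => k : ℕ) : ℚ) + m := by
        rw [valsum, valsum, hkey]
        rw [Finsupp.sum_add_index' (fun v => rfl) (fun v a b => rfl)]
        congr 1
        exact Finsupp.sum_single_index rfl
      have hhtlt : (d.sum fun _ k => k) < n := by
        have h1 : ((d.sum fun _ k => k : ℕ) : ℚ) < n := by
          rw [← hcht]
          have : (1 : ℚ) ≤ m := by rw [hkm]; exact_mod_cast hkm1
          linarith [hhtq]
        exact_mod_cast h1
      have hIH := IH _ hhtlt β hβΦ d hdsupp hdsum rfl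
      by_cases hδ1 : δ ∈ Δ₁
      · rcases hIH with hβ1 | hβ2
        · left
          have : α = β + m • δ := by rw [hβdef]; module
          rw [this]
          exact Submodule.add_mem _ hβ1 (Submodule.smul_mem _ _ (Submodule.subset_span hδ1))
        · -- collapse case : δ ∈ Δ₁, β ∈ span (Δ \ Δ₁)
          exfalso
          exact collapse hRS hΔ hpos hsym hinv hX' hX'' hΔ₁ hα hδΦ hδΔ hβΦ hβne hdsupp hdsum
            hkm hkm1 hβdef (Or.inl ⟨hδ1, hβ2⟩)
      · rcases hIH with hβ1 | hβ2
        · exfalso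
          exact collapse hRS hΔ hpos hsym hinv hX' hX'' hΔ₁ hα hδΦ hδΔ hβΦ hβne hdsupp hdsum
            hkm hkm1 hβdef (Or.inr ⟨⟨hδΔ, hδ1⟩, hβ1⟩)
        · right
          have : α = β + m • δ := by rw [hβdef]; module
          rw [this]
          exact Submodule.add_mem _ hβ2
            (Submodule.smul_mem _ _ (Submodule.subset_span ⟨hδΔ, hδ1⟩))
    · -- β = - sumn d : impossible since support is mixed
      exfalso
      have hkey : qf c + qf d = Finsupp.single δ m := by
        apply uniq hΔ
        · intro v hv
          rcases Finset.mem_union.1 (Finsupp.support_add (Finset.mem_coe.1 hv)) with h' | h'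
          · exact (Finset.coe_subset.2 (qf_support c)).trans hcsupp h'
          · exact (Finset.coe_subset.2 (qf_support d)).trans hdsupp h'
        · exact hδsuppΔ
        · rw [sumq_add, sumq_qf, sumq_qf, sumq_single]
          have h1 : sumn d = -β := by
            have : β = -(d.sum fun v k => (k : ℚ) • v) := hdneg
            rw [this]; unfold sumn; module
          rw [h1, ← hcsum', hβdef]
          module
      -- pick a support element different from δ
      have : ∃ y, y ∈ c.support ∧ y ≠ δ := by
        by_cases hδ1 : δ ∈ Δ₁
        · exact ⟨y₂, hy₂s, fun h => hy₂ (h ▸ hδ1)⟩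
        · exact ⟨y₁, hy₁s, fun h => hδ1 (h ▸ hy₁)⟩
      obtain ⟨y, hys, hyδ⟩ := this
      have := DFunLike.congr_fun hkey y
      simp only [Finsupp.add_apply, qf_apply, Finsupp.single_apply, if_neg (fun h : δ = y => hyδ h.symm)]
        at this
      have hcy : 1 ≤ c y := Nat.one_le_iff_ne_zero.2 (Finsupp.mem_support_iff.1 hys)
      have h1 : (1 : ℚ) ≤ (c y : ℚ) := by exact_mod_cast hcy
      have h2 : (0 : ℚ) ≤ (d y : ℚ) := Nat.cast_nonneg _
      linarith
  intro α hα
  obtain ⟨c, hcsupp, hcsign⟩ := hΔ.decomp α hα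
  rcases hcsign with h | h
  · exact claim _ α hα c hcsupp h rfl
  · have hneg : -α ∈ Φ := neg_mem hRS hα
    have h' : -α = c.sum fun v k => (k : ℚ) • v := by rw [h]; simp
    rcases claim _ (-α) hneg c hcsupp h' rfl with h1 | h1
    · left; simpa using Submodule.neg_mem _ h1
    · right; simpa using Submodule.neg_mem _ h1

end Split

@[simp] theorem coact_apply (w : V ≃ₗ[ℚ] V) (f : Module.Dual ℚ V) (x : V) :
    coact w f x = f (w.symm x) := rfl

section Graph

variable (B : V →ₗ[ℚ] V →ₗ[ℚ] ℚ) (Δ : Set V)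

/-- The graph on the base, with simple roots adjacent iff they are non-orthogonal. -/
def baseGraph : SimpleGraph V where
  Adj x y := x ≠ y ∧ x ∈ Δ ∧ y ∈ Δ ∧ (B x y ≠ 0 ∨ B y x ≠ 0)
  symm := ⟨fun x y ⟨h1, h2, h3, h4⟩ => ⟨h1.symm, h3, h2, h4.symm⟩⟩
  loopless := ⟨fun x h => h.1 rfl⟩

variable {B Δ}

theorem walk_support_mem {u v : V} (p : (baseGraph B Δ).Walk u v) (hu : u ∈ Δ) :
    ∀ x ∈ p.support, x ∈ Δ := by
  induction p with
  | nil => intro x hx; simp at hx; exact hx ▸ hu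
  | cons h q IH =>
    intro x hx
    rw [SimpleGraph.Walk.support_cons, List.mem_cons] at hx
    rcases hx with rfl | hx
    · exact hu
    · exact IH h.2.2.1 x hx

theorem base_connected (hRS : IsRootSystem Φ co) (hΔ : IsBase Φ co Δ)
    (hpos : ∀ x : V, x ≠ 0 → 0 < B x x) (hsym : ∀ x y, B x y = B y x)
    (hinv : ∀ w, w ∈ weylGroup Φ co → ∀ x y, B (w x) (w y) = B x y)
    (hirr : IsIrreducible Φ co) {β γ : V} (hβ : β ∈ Δ) (hγ : γ ∈ Δ) :
    (baseGraph B Δ).Reachable β γ := by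
  set Δ₁ : Set V := {δ | δ ∈ Δ ∧ (baseGraph B Δ).Reachable β δ} with hΔ₁def
  have hΔ₁sub : Δ₁ ⊆ Δ := fun x hx => hx.1
  by_cases hγ1 : γ ∈ Δ₁
  · exact hγ1.2
  have hX : ∀ x ∈ Δ₁, ∀ y ∈ Δ, y ∉ Δ₁ → B x y = 0 := by
    intro x hx y hy hy1
    by_contra hB
    rcases eq_or_ne x y with rfl | hne
    · exact hy1 hx
    · exact hy1 ⟨hy, hx.2.trans (SimpleGraph.Adj.reachable ⟨hne, hx.1, hy, Or.inl hB⟩)⟩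
  have hsplit := split hRS hΔ hpos hsym hinv hΔ₁sub hX
  have hX'' : ∀ x ∈ (Δ \ Δ₁ : Set V), ∀ y ∈ Δ₁, B x y = 0 := fun x hx y hy =>
    (hsym x y).trans (hX y hy x hx.1 hx.2)
  set Ψ : Set V := {a | a ∈ Φ ∧ a ∈ Submodule.span ℚ Δ₁} with hΨdef
  have hΨsub : Ψ ⊆ Φ := fun a ha => ha.1
  have hsep : ∀ a ∈ Ψ, ∀ b ∈ Φ \ Ψ, co a b = 0 := by
    intro a ha b hb
    have hbspan : b ∈ Submodule.span ℚ (Δ \ Δ₁ : Set V) := by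
      rcases hsplit b hb.1 with h | h
      · exact absurd ⟨hb.1, h⟩ hb.2
      · exact h
    have hBba : B b a = 0 := span_ortho hX'' hbspan ha.2
    exact (co_zero_iff hRS hpos hinv ha.1 b).2 hBba
  rcases hirr.2 Ψ hΨsub hsep with hemp | hall
  · exfalso
    have : β ∈ Ψ := ⟨hΔ.subset hβ, Submodule.subset_span ⟨hβ, SimpleGraph.Reachable.refl β⟩⟩
    rw [hemp] at this
    exact this
  · exfalso
    have hγΨ : γ ∈ Ψ := hall ▸ hΔ.subset hγ
    have hγspan : γ ∈ Submodule.span ℚ (Δ \ {γ} : Set V) := by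
      refine Submodule.span_mono ?_ hγΨ.2
      intro z hz
      exact ⟨hΔ₁sub hz, fun h => hγ1 (h ▸ hz)⟩
    have h1 : ((↑) : Δ → V) '' {z : Δ | (z : V) ≠ γ} = (Δ \ {γ} : Set V) := by
      ext z
      constructor
      · rintro ⟨⟨z', hz'⟩, hz2, rfl⟩
        exact ⟨hz', hz2⟩
      · rintro ⟨hz1, hz2⟩
        exact ⟨⟨z, hz1⟩, hz2, rfl⟩
    have h2 := hΔ.indep.notMem_span_image (R := ℚ) (s := {z : Δ | (z : V) ≠ γ})
      (x := ⟨γ, hγ⟩) (by simp)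
    rw [h1] at h2
    exact h2 hγspan

end Graph

section Walk

variable {B : V →ₗ[ℚ] V →ₗ[ℚ] ℚ} {Δ : Set V} {χ : V}

theorem walk_gain (hRS : IsRootSystem Φ co) (hΔ : IsBase Φ co Δ)
    (hpos : ∀ x : V, x ≠ 0 → 0 < B x x) (hsym : ∀ x y, B x y = B y x)
    (hinv : ∀ w, w ∈ weylGroup Φ co → ∀ x y, B (w x) (w y) = B x y)
    (hdom : IsDominant co Δ χ) {γ : V} :
    ∀ {u' : V} (p : (baseGraph B Δ).Walk u' γ), p.IsPath →
      ∀ u, (baseGraph B Δ).Adj u u' → ∀ v ∈ Φ,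
      (∀ x ∈ p.support, B v x ≤ 0 ∧ (B u x ≠ 0 → B v x < 0)) →
      ∃ v' ∈ Φ, (∃ w : V ≃ₗ[ℚ] V, w ∈ weylGroup Φ co ∧ v' = w v) ∧
        co v χ + co γ χ ≤ co v' χ := by
  intro u' p
  induction p with
  | @nil z =>
    intro _ u hadj v hv H
    have hγΔ : z ∈ Δ := hadj.2.2.1
    have hγΦ : z ∈ Φ := hΔ.subset hγΔ
    have hBuγ : B u z ≠ 0 := by
      rcases hadj.2.2.2 with h' | h'
      · exact h'
      · rw [hsym]; exact h'
    have hBvγ : B v z < 0 :=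
      (H z (SimpleGraph.Walk.start_mem_support _)).2 hBuγ
    have hcovγ : co v z < 0 := (co_neg_iff hRS hpos hinv hv z).2 (by
      rw [hsym]; exact hBvγ)
    have hcoγv : co z v < 0 := (co_neg_iff hRS hpos hinv hγΦ v).2 hBvγ
    obtain ⟨k, hk⟩ := hRS.pair_int v hv z hγΦ
    have hk0 : k < 0 := by
      have : (k : ℚ) < 0 := hk ▸ hcovγ
      exact_mod_cast this
    have hk1' : co v z ≤ -1 := by
      rw [hk]
      have : k ≤ -1 := by omega
      exact_mod_cast this
    obtain ⟨sg, hsW, hs, hssymm⟩ := exists_refl hRS hγΦ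
    have hv' : v - (co z v) • z ∈ Φ := hRS.refl_mem z hγΦ v hv
    refine ⟨v - (co z v) • z, hv', ⟨sg, hsW, (hs v).symm⟩, ?_⟩
    have hcoeq : co (v - (co z v) • z) χ = co v χ - co z χ * co v z := by
      have h1 : v - (co z v) • z = sg v := (hs v).symm
      rw [h1, hRS.weyl_coroot sg hsW v hv, coact_apply, hssymm χ, map_sub, map_smul,
        smul_eq_mul]
    rw [hcoeq]
    have hdγ : 0 ≤ co z χ := hdom z hγΔ
    nlinarith
  | @cons u' u'' γ h₂ q IH =>
    intro hpath u hadj v hv H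
    have hu'Δ : u' ∈ Δ := hadj.2.2.1
    have hu'Φ : u' ∈ Φ := hΔ.subset hu'Δ
    have hu''Δ : u'' ∈ Δ := h₂.2.2.1
    have hBuu' : B u u' ≠ 0 := by
      rcases hadj.2.2.2 with h' | h'
      · exact h'
      · rw [hsym]; exact h'
    have hBvu' : B v u' < 0 :=
      (H u' (SimpleGraph.Walk.start_mem_support _)).2 hBuu'
    have hcovu' : co v u' < 0 := (co_neg_iff hRS hpos hinv hv u').2 (by
      rw [hsym]; exact hBvu')
    have hcou'v : co u' v < 0 := (co_neg_iff hRS hpos hinv hu'Φ v).2 hBvu'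
    obtain ⟨sg, hsW, hs, hssymm⟩ := exists_refl hRS hu'Φ
    set v₁ : V := v - (co u' v) • u' with hv₁def
    have hv₁Φ : v₁ ∈ Φ := hRS.refl_mem u' hu'Φ v hv
    have hq : q.IsPath ∧ u' ∉ q.support := by
      rw [SimpleGraph.Walk.cons_isPath_iff] at hpath
      exact hpath
    have hH' : ∀ x ∈ q.support, B v₁ x ≤ 0 ∧ (B u' x ≠ 0 → B v₁ x < 0) := by
      intro x hx
      have hxΔ : x ∈ Δ := walk_support_mem q hu''Δ x hx
      have hxne : u' ≠ x := fun h => hq.2 (h ▸ hx)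
      have hBu'x : B u' x ≤ 0 :=
        (base_pair_nonpos hRS hΔ hpos hsym hinv hu'Δ hxΔ hxne).1
      have hBvx : B v x ≤ 0 :=
        (H x (by rw [SimpleGraph.Walk.support_cons]; exact List.mem_cons_of_mem _ hx)).1
      have hexp : B v₁ x = B v x - co u' v * B u' x := by
        rw [hv₁def, map_sub, map_smul, LinearMap.sub_apply, LinearMap.smul_apply,
          smul_eq_mul]
      constructor
      · rw [hexp]; nlinarith
      · intro hne0
        have : B u' x < 0 := lt_of_le_of_ne hBu'x hne0
        rw [hexp]; nlinarith
    obtain ⟨v', hv'Φ, ⟨w₁, hw₁, hw₁eq⟩, hgain⟩ := IH hq.1 u' h₂ v₁ hv₁Φ hH'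
    refine ⟨v', hv'Φ, ⟨w₁ * sg, mul_mem hw₁ hsW, ?_⟩, ?_⟩
    · rw [hw₁eq]
      have : v₁ = sg v := (hs v).symm
      rw [this]
      rfl
    · have hcoeq : co v₁ χ = co v χ - co u' χ * co v u' := by
        have h1 : v₁ = sg v := (hs v).symm
        rw [h1, hRS.weyl_coroot sg hsW v hv, coact_apply, hssymm χ, map_sub, map_smul,
          smul_eq_mul]
      have hdu' : 0 ≤ co u' χ := hdom u' hu'Δ
      have : co v χ ≤ co v₁ χ := by rw [hcoeq]; nlinarith
      linarith

end Walk

section Main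

variable {B : V →ₗ[ℚ] V →ₗ[ℚ] ℚ} {Δ : Set V} {χ : V}

theorem two_support_false (hRS : IsRootSystem Φ co) (hΔ : IsBase Φ co Δ)
    (hpos : ∀ x : V, x ≠ 0 → 0 < B x x) (hsym : ∀ x y, B x y = B y x)
    (hinv : ∀ w, w ∈ weylGroup Φ co → ∀ x y, B (w x) (w y) = B x y)
    (hirr : IsIrreducible Φ co) (hqc : IsQuasiConstant Φ co χ)
    (hdom : IsDominant co Δ χ) {β γ : V} (hβ : β ∈ Δ) (hγ : γ ∈ Δ) (hne : β ≠ γ)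
    (hcβ : co β χ ≠ 0) (hcγ : co γ χ ≠ 0) : False := by
  have hβΦ : β ∈ Φ := hΔ.subset hβ
  have hγΦ : γ ∈ Φ := hΔ.subset hγ
  have hcβpos : 0 < co β χ := lt_of_le_of_ne (hdom β hβ) (Ne.symm hcβ)
  have hcγpos : 0 < co γ χ := lt_of_le_of_ne (hdom γ hγ) (Ne.symm hcγ)
  obtain ⟨p0⟩ := base_connected hRS hΔ hpos hsym hinv hirr hβ hγ
  have hp : p0.bypass.IsPath := SimpleGraph.Walk.bypass_isPath p0
  obtain ⟨u', h, q, hpeq⟩ := SimpleGraph.Walk.exists_eq_cons_of_ne hne p0.bypass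
  rw [hpeq] at hp
  rw [SimpleGraph.Walk.cons_isPath_iff] at hp
  have hH : ∀ x ∈ q.support, B β x ≤ 0 ∧ (B β x ≠ 0 → B β x < 0) := by
    intro x hx
    have hxΔ : x ∈ Δ := walk_support_mem q h.2.2.1 x hx
    have hxne : β ≠ x := fun e => hp.2 (e ▸ hx)
    have h1 : B β x ≤ 0 := (base_pair_nonpos hRS hΔ hpos hsym hinv hβ hxΔ hxne).1
    exact ⟨h1, fun h2 => lt_of_le_of_ne h1 h2⟩
  obtain ⟨v', hv'Φ, ⟨w, hw, hv'eq⟩, hgain⟩ :=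
    walk_gain hRS hΔ hpos hsym hinv hdom q hp.1 β h β hβΦ hH
  have hmem := hqc β hβΦ hcβ w hw
  have hco : coact w (co β) χ = co v' χ := by
    rw [hv'eq, hRS.weyl_coroot w hw β hβΦ]
  rw [hco] at hmem
  have hgt : co β χ < co v' χ := by linarith
  have hr : 1 < co v' χ / co β χ := (one_lt_div hcβpos).2 hgt
  simp only [Set.mem_insert_iff, Set.mem_singleton_iff] at hmem
  rcases hmem with h' | h' | h' <;> rw [h'] at hr <;> norm_num at hr

theorem nondeg (hRS : IsRootSystem Φ co) (hΔ : IsBase Φ co Δ)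
    (hspan : Submodule.span ℚ Φ = ⊤)
    (hpos : ∀ x : V, x ≠ 0 → 0 < B x x)
    (hinv : ∀ w, w ∈ weylGroup Φ co → ∀ x y, B (w x) (w y) = B x y)
    {x : V} (hx : ∀ δ ∈ Δ, co δ x = 0) : x = 0 := by
  by_contra hne
  have hBx : ∀ δ ∈ Δ, B x δ = 0 := fun δ hδ =>
    (co_zero_iff hRS hpos hinv (hΔ.subset hδ) x).1 (hx δ hδ)
  have hle : Submodule.span ℚ Δ ≤ LinearMap.ker (B x) :=
    Submodule.span_le.2 fun δ hδ => LinearMap.mem_ker.2 (hBx δ hδ)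
  have htop : Submodule.span ℚ Δ = ⊤ := hΔ.span_eq.trans hspan
  have hx0 : B x x = 0 := hle (htop ▸ Submodule.mem_top)
  exact (hpos x hne).ne' hx0

theorem exists_fundWeight [FiniteDimensional ℚ V] (hRS : IsRootSystem Φ co)
    (hΔ : IsBase Φ co Δ) (hspan : Submodule.span ℚ Φ = ⊤)
    (hpos : ∀ x : V, x ≠ 0 → 0 < B x x)
    (hinv : ∀ w, w ∈ weylGroup Φ co → ∀ x y, B (w x) (w y) = B x y)
    {β : V} (hβ : β ∈ Δ) : ∃ η : V, IsFundWeight co Δ β η := by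
  classical
  haveI : Fintype Δ := (hRS.finite.subset hΔ.subset).fintype
  set T : V →ₗ[ℚ] (Δ → ℚ) := LinearMap.pi (fun δ : Δ => co δ.1) with hT
  have hTapp : ∀ x (δ : Δ), T x δ = co δ.1 x := fun x δ => rfl
  have hker : LinearMap.ker T = ⊥ := by
    rw [LinearMap.ker_eq_bot']
    intro x hxker
    refine nondeg hRS hΔ hspan hpos hinv (fun δ hδ => ?_)
    have := congrFun hxker ⟨δ, hδ⟩
    simpa [hTapp] using this
  have htop : Submodule.span ℚ Δ = ⊤ := hΔ.span_eq.trans hspan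
  have b : Module.Basis Δ ℚ V := Module.Basis.mk hΔ.indep (by rw [Subtype.range_coe]; exact htop.ge)
  have h1 : Module.finrank ℚ V = Fintype.card Δ := Module.finrank_eq_card_basis b
  have h2 : Module.finrank ℚ (Δ → ℚ) = Fintype.card Δ := by
    simp [Module.finrank_pi]
  have hsurj : LinearMap.range T = ⊤ := by
    apply Submodule.eq_top_of_finrank_eq
    have h3 := LinearMap.finrank_range_add_finrank_ker T
    rw [hker, finrank_bot, add_zero] at h3
    rw [h3, h1, h2]
  obtain ⟨η, hη⟩ := LinearMap.range_eq_top.1 hsurj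
    (fun δ : Δ => if (δ : V) = β then 1 else 0)
  refine ⟨η, fun δ hδ => ?_⟩
  have := congrFun hη ⟨δ, hδ⟩
  rw [hTapp] at this
  simpa using this

end Main

end QC

/-- Lemma 3.1 of the paper. Let `Φ` be a reduced irreducible root
system spanning `V` which is not simply-laced, and let `Δ ⊆ Φ` be a base. If `χ ∈ P` is
`Δ`-dominant and quasi-constant, then `χ = m • η(β)` for some simple root `β ∈ Δ` and
some nonnegative integer `m`. -/
theorem statement3 {V : Type*} [AddCommGroup V] [Module ℚ V] [FiniteDimensional ℚ V]
    (Φ : Set V) (co : V → Module.Dual ℚ V)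
    (hRS : QC.IsRootSystem Φ co) (hirr : QC.IsIrreducible Φ co)
    (hspan : Submodule.span ℚ Φ = ⊤)
    (hNSL : ¬ ∀ α ∈ Φ, ∀ β ∈ Φ, ∃ w, w ∈ QC.weylGroup Φ co ∧ w α = β)
    (Δ : Set V) (hΔ : QC.IsBase Φ co Δ)
    (χ : V) (hχ : χ ∈ QC.weightLattice Φ co)
    (hdom : QC.IsDominant co Δ χ) (hqc : QC.IsQuasiConstant Φ co χ) :
    ∃ β ∈ Δ, ∃ (m : ℕ) (η : V), QC.IsFundWeight co Δ β η ∧ χ = (m : ℚ) • η := by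
  classical
  obtain ⟨B, hsym, hpos', hinv⟩ := QC.exists_form hRS hspan
  have hpos : ∀ x : V, x ≠ 0 → 0 < B x x := hpos'
  -- Δ is nonempty
  obtain ⟨α₀, hα₀⟩ := hirr.1
  have hΔne : ∃ β₀, β₀ ∈ Δ := by
    by_contra hc
    push_neg at hc
    have hΔe : Δ = ∅ := Set.eq_empty_iff_forall_notMem.2 hc
    have htop : Submodule.span ℚ Δ = ⊤ := hΔ.span_eq.trans hspan
    rw [hΔe] at htop
    simp only [Submodule.span_empty] at htop
    have : α₀ ∈ (⊥ : Submodule ℚ V) := htop ▸ Submodule.mem_top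
    exact hRS.ne_zero α₀ hα₀ (Submodule.mem_bot ℚ |>.1 this)
  by_cases hall : ∀ δ ∈ Δ, co δ χ = 0
  · -- χ = 0
    have hχ0 : χ = 0 := QC.nondeg hRS hΔ hspan hpos hinv hall
    obtain ⟨β₀, hβ₀⟩ := hΔne
    obtain ⟨η, hη⟩ := QC.exists_fundWeight hRS hΔ hspan hpos hinv hβ₀
    exact ⟨β₀, hβ₀, 0, η, hη, by rw [hχ0]; simp⟩
  · push_neg at hall
    obtain ⟨β, hβ, hcβ⟩ := hall
    have huniq : ∀ δ ∈ Δ, δ ≠ β → co δ χ = 0 := by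
      intro δ hδ hne
      by_contra hc
      exact QC.two_support_false hRS hΔ hpos hsym hinv hirr hqc hdom hβ hδ
        (Ne.symm hne) hcβ hc
    have hcβpos : 0 < co β χ := lt_of_le_of_ne (hdom β hβ) (Ne.symm hcβ)
    obtain ⟨n, hn⟩ := hχ β (hΔ.subset hβ)
    have hn1 : 1 ≤ n := by
      have : (0 : ℚ) < n := hn ▸ hcβpos
      exact_mod_cast this
    refine ⟨β, hβ, n.toNat, (co β χ)⁻¹ • χ, ?_, ?_⟩
    · intro δ hδ
      rcases eq_or_ne δ β with rfl | hne
      · rw [if_pos rfl, map_smul, smul_eq_mul, inv_mul_cancel₀ hcβ]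
      · rw [if_neg hne, map_smul, smul_eq_mul, huniq δ hδ hne, mul_zero]
    · have hcast : ((n.toNat : ℕ) : ℚ) = co β χ := by
        rw [hn]
        norm_cast
        omega
      rw [hcast, smul_smul, mul_inv_cancel₀ hcβ, one_smul]
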